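/- Let G1, G2 ∈ ℝ^{n×n} be symmetric positive definite matrices such that G1 − G2 is symmetric positive definite, let G ∈ ℝ^{m×m} be symmetric positive semidefinite, and let B ∈ ℝ^{n×m} have full column rank. Define R1 = chol(G + BᵀG1B), R2 = chol(G + BᵀG2B), R3 = chol(G + BᵀG1⁻¹B), R4 = chol(G + BᵀG2⁻¹B), R̂1 = chol((G + BᵀG1B)⁻¹), R̂2 = chol((G + BᵀG2B)⁻¹), R̂3 = chol((G + BᵀG1⁻¹B)⁻¹), R̂4 = chol((G + BᵀG2⁻¹B)⁻¹). Then for every i = 1, …, m: λ_i(R1) > λ_i(R2), λ_i(R̂1) < λ_i(R̂2), λ_i(R3) < λ_i(R4), and λ_i(R̂3) > λ_i(R̂4). -/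

import Mathlib

/-!
Write `Aᵢ = G + Bᵀ Dᵢ B` for the four Gram matrices. Full column rank of `B` makes
`A₁ - A₂ = Bᵀ (G₁ - G₂) B` and `A₄ - A₃ = Bᵀ (G₂⁻¹ - G₁⁻¹) B` positive definite, and inversion
reverses the strict Loewner order (Woodbury identity). So all four claims reduce to one comparison:
if `RᵀR - SᵀS` is positive definite, then by compactness of the unit sphere there is `c > 1` with
`c ‖S x‖ ≤ ‖R x‖` for all `x`. Scaling a set of `i` independent short vectors of `L(R)` by `1 / c`
gives such a set for `L(S)`, hence `c λᵢ(S) ≤ λᵢ(R)`, and `λᵢ(S) > 0` makes this strict.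
-/

open Matrix

noncomputable section

/-- Euclidean norm of a real vector. -/
def euclNorm {m : ℕ} (x : Fin m → ℝ) : ℝ := Real.sqrt (∑ k, x k ^ 2)

/-- The lattice vector `A z` for an integer vector `z`. -/
def latticeVec {m n : ℕ} (A : Matrix (Fin m) (Fin n) ℝ) (z : Fin n → ℤ) : Fin m → ℝ :=
  A.mulVec fun k => (z k : ℝ)

/-- The `i`-th successive minimum of the lattice generated by `A`: the smallest `r ≥ 0` such
that the closed ball of radius `r` centered at the origin contains `i` linearly independent
lattice vectors. -/
def succMin {m n : ℕ} (A : Matrix (Fin m) (Fin n) ℝ) (i : ℕ) : ℝ :=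
  sInf {r : ℝ | 0 ≤ r ∧ ∃ v : Fin i → (Fin n → ℤ),
    LinearIndependent ℝ (fun j => latticeVec A (v j)) ∧
    ∀ j, euclNorm (latticeVec A (v j)) ≤ r}

/-- `R` is the Cholesky factor of `G`: `R` is upper triangular with positive diagonal
entries and `Rᵀ * R = G`. -/
def IsCholesky {n : ℕ} (G R : Matrix (Fin n) (Fin n) ℝ) : Prop :=
  R.BlockTriangular id ∧ (∀ j, 0 < R j j) ∧ Rᵀ * R = G

namespace Matrix

theorem dotProduct_mulVec_smul_smul {ι : Type*} [Fintype ι] (A : Matrix ι ι ℝ) (t : ℝ)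
    (x : ι → ℝ) : (t • x) ⬝ᵥ A *ᵥ (t • x) = t ^ 2 * (x ⬝ᵥ A *ᵥ x) := by
  rw [mulVec_smul, smul_dotProduct, dotProduct_smul, smul_smul, smul_eq_mul, sq]

theorem continuous_dotProduct_mulVec_self {ι : Type*} [Fintype ι] (A : Matrix ι ι ℝ) :
    Continuous fun x : ι → ℝ => x ⬝ᵥ A *ᵥ x := by
  fun_prop

theorem PosDef.exists_pos_mul_dotProduct_mulVec_le {ι : Type*} [Fintype ι] {P : Matrix ι ι ℝ}
    (hP : P.PosDef) (Q : Matrix ι ι ℝ) :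
    ∃ δ > 0, ∀ x, δ * (x ⬝ᵥ Q *ᵥ x) ≤ x ⬝ᵥ P *ᵥ x := by
  -- compare the extreme values of both forms on the unit sphere, then extend by homogeneity
  rcases isEmpty_or_nonempty ι with hι | hι
  · exact ⟨1, one_pos, fun x => by simp [dotProduct]⟩
  have hsphere : (Metric.sphere (0 : ι → ℝ) 1).Nonempty :=
    NormedSpace.sphere_nonempty.2 zero_le_one
  obtain ⟨u, hu, hmin⟩ := (isCompact_sphere (0 : ι → ℝ) 1).exists_isMinOn hsphere
    (continuous_dotProduct_mulVec_self P).continuousOn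
  obtain ⟨w, -, hmax⟩ := (isCompact_sphere (0 : ι → ℝ) 1).exists_isMaxOn hsphere
    (continuous_dotProduct_mulVec_self Q).continuousOn
  set p := u ⬝ᵥ P *ᵥ u
  set q := w ⬝ᵥ Q *ᵥ w
  have hp : 0 < p := by
    simpa [star_trivial] using hP.dotProduct_mulVec_pos (ne_zero_of_mem_unit_sphere ⟨u, hu⟩)
  refine ⟨p / (|q| + 1), by positivity, fun x => ?_⟩
  have hunit : ∀ y ∈ Metric.sphere (0 : ι → ℝ) 1,
      p / (|q| + 1) * (y ⬝ᵥ Q *ᵥ y) ≤ y ⬝ᵥ P *ᵥ y := by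
    intro y hy
    calc p / (|q| + 1) * (y ⬝ᵥ Q *ᵥ y) ≤ p / (|q| + 1) * |q| := by
          gcongr
          exact (hmax hy).trans (le_abs_self q)
      _ ≤ p := by
          rw [div_mul_eq_mul_div, div_le_iff₀ (by positivity)]
          nlinarith [abs_nonneg q]
      _ ≤ y ⬝ᵥ P *ᵥ y := hmin hy
  rcases eq_or_ne x 0 with rfl | hx
  · simp
  have hx' : 0 < ‖x‖ := norm_pos_iff.2 hx
  have hxu : x = ‖x‖ • (‖x‖⁻¹ • x) := by rw [smul_smul, mul_inv_cancel₀ hx'.ne', one_smul]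
  have hnorm : ‖x‖⁻¹ • x ∈ Metric.sphere (0 : ι → ℝ) 1 := by
    rw [mem_sphere_zero_iff_norm, norm_smul, norm_inv, norm_norm, inv_mul_cancel₀ hx'.ne']
  have := mul_le_mul_of_nonneg_left (hunit _ hnorm) (sq_nonneg ‖x‖)
  rwa [mul_left_comm, ← dotProduct_mulVec_smul_smul, ← dotProduct_mulVec_smul_smul, ← hxu] at this

open scoped ComplexOrder in
theorem PosDef.inv_sub_inv {ι 𝕜 : Type*} [Fintype ι] [DecidableEq ι] [RCLike 𝕜]
    {A B : Matrix ι ι 𝕜} (hB : B.PosDef) (hAB : (A - B).PosDef) : (B⁻¹ - A⁻¹).PosDef := by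
  -- Woodbury with `U = V = 1`: `B⁻¹ - (B + D)⁻¹ = B⁻¹ (D⁻¹ + B⁻¹)⁻¹ B⁻¹`
  have hW := add_mul_mul_inv_eq_sub B 1 (A - B) 1 hB.isUnit hAB.isUnit
    (by simpa using (hAB.inv.add hB.inv).isUnit)
  simp only [Matrix.mul_one, Matrix.one_mul, add_sub_cancel] at hW
  rw [hW, sub_sub_cancel]
  have hBinv : (B⁻¹)ᴴ = B⁻¹ := hB.inv.1
  simpa [hBinv] using ((hAB.inv.add hB.inv).inv).conjTranspose_mul_mul_same
    (B := B⁻¹) (mulVec_injective_of_isUnit hB.inv.isUnit)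

theorem PosDef.transpose_mul_mul_same {m n : Type*} [Fintype m] [Fintype n]
    {D : Matrix n n ℝ} (hD : D.PosDef) {B : Matrix n m ℝ} (hB : Function.Injective B.mulVec) :
    (Bᵀ * D * B).PosDef := by
  simpa only [conjTranspose_eq_transpose_of_trivial] using hD.conjTranspose_mul_mul_same hB

theorem posDef_add_transpose_mul_mul_sub {m n : Type*} [Fintype m] [Fintype n]
    (G : Matrix m m ℝ) {B : Matrix n m ℝ} (hB : Function.Injective B.mulVec)
    {D₁ D₂ : Matrix n n ℝ} (hD : (D₁ - D₂).PosDef) :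
    ((G + Bᵀ * D₁ * B) - (G + Bᵀ * D₂ * B)).PosDef := by
  rw [add_sub_add_left_eq_sub, ← Matrix.sub_mul, ← Matrix.mul_sub]
  exact hD.transpose_mul_mul_same hB

theorem mulVec_injective_of_rank_eq {m n K : Type*} [Fintype m] [Fintype n] [Field K]
    {B : Matrix m n K} (hB : B.rank = Fintype.card n) : Function.Injective B.mulVec := by
  rw [mulVec_injective_iff, linearIndependent_iff_card_eq_finrank_span, ← hB,
    rank_eq_finrank_span_cols]
  rfl

theorem mulVec_injective_of_posDef_transpose_mul_self {m n : Type*} [Fintype m] [Fintype n]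
    {A : Matrix m n ℝ} (hA : (Aᵀ * A).PosDef) : Function.Injective A.mulVec := by
  classical
  intro x y hxy
  apply mulVec_injective_of_isUnit hA.isUnit
  rw [← mulVec_mulVec, hxy, mulVec_mulVec]

end Matrix

theorem euclNorm_nonneg {m : ℕ} (x : Fin m → ℝ) : 0 ≤ euclNorm x := Real.sqrt_nonneg _

theorem euclNorm_sq {m : ℕ} (x : Fin m → ℝ) : euclNorm x ^ 2 = x ⬝ᵥ x := by
  rw [euclNorm, Real.sq_sqrt (by positivity)]
  simp only [dotProduct, sq]

theorem euclNorm_mulVec_sq {m n : ℕ} (A : Matrix (Fin m) (Fin n) ℝ) (x : Fin n → ℝ) :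
    euclNorm (A *ᵥ x) ^ 2 = x ⬝ᵥ (Aᵀ * A) *ᵥ x := by
  rw [euclNorm_sq, ← mulVec_mulVec, dotProduct_mulVec, ← mulVec_transpose, dotProduct_comm]

theorem one_le_dotProduct_self_intCast {n : ℕ} {z : Fin n → ℤ} (hz : z ≠ 0) :
    1 ≤ (fun k => (z k : ℝ)) ⬝ᵥ (fun k => (z k : ℝ)) := by
  obtain ⟨k, hk⟩ := Function.ne_iff.1 hz
  have habs : (1 : ℝ) ≤ |(z k : ℝ)| := by exact_mod_cast Int.one_le_abs hk
  have hsq : (1 : ℝ) ≤ (z k : ℝ) * z k := by nlinarith [abs_mul_abs_self (z k : ℝ)]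
  exact hsq.trans (Finset.single_le_sum (f := fun k => (z k : ℝ) * z k)
    (fun k _ => mul_self_nonneg _) (Finset.mem_univ k))

def succMinRadii {m n : ℕ} (A : Matrix (Fin m) (Fin n) ℝ) (i : ℕ) : Set ℝ :=
  {r : ℝ | 0 ≤ r ∧ ∃ v : Fin i → (Fin n → ℤ),
    LinearIndependent ℝ (fun j => latticeVec A (v j)) ∧
    ∀ j, euclNorm (latticeVec A (v j)) ≤ r}

theorem succMin_eq_sInf {m n : ℕ} (A : Matrix (Fin m) (Fin n) ℝ) (i : ℕ) :
    succMin A i = sInf (succMinRadii A i) := rfl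

theorem linearIndependent_latticeVec_iff {m n i : ℕ} {A : Matrix (Fin m) (Fin n) ℝ}
    (hA : Function.Injective A.mulVec) (v : Fin i → Fin n → ℤ) :
    LinearIndependent ℝ (fun j => latticeVec A (v j)) ↔
      LinearIndependent ℝ (fun j k => (v j k : ℝ)) :=
  LinearMap.linearIndependent_iff A.mulVecLin (LinearMap.ker_eq_bot.2 hA)

theorem succMinRadii_nonempty {m n i : ℕ} {A : Matrix (Fin m) (Fin n) ℝ}
    (hA : Function.Injective A.mulVec) (hi : i ≤ n) : (succMinRadii A i).Nonempty := by
  set v : Fin i → Fin n → ℤ := fun j => Pi.single (Fin.castLE hi j) 1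
  have hv : (fun j k => (v j k : ℝ)) = Pi.basisFun ℝ (Fin n) ∘ Fin.castLE hi := by
    ext j k
    simp [v, Pi.single_apply]
  refine ⟨∑ j, euclNorm (latticeVec A (v j)),
    Finset.sum_nonneg fun j _ => euclNorm_nonneg _, v, ?_, fun j => ?_⟩
  · rw [linearIndependent_latticeVec_iff hA, hv]
    exact (Pi.basisFun ℝ (Fin n)).linearIndependent.comp _ (Fin.castLE_injective hi)
  · exact Finset.single_le_sum (f := fun j => euclNorm (latticeVec A (v j)))
      (fun j _ => euclNorm_nonneg _) (Finset.mem_univ j)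

theorem succMin_pos {m n i : ℕ} {A : Matrix (Fin m) (Fin n) ℝ} (hA : (Aᵀ * A).PosDef)
    (h1 : 1 ≤ i) (hi : i ≤ n) : 0 < succMin A i := by
  obtain ⟨δ, hδ, hle⟩ := hA.exists_pos_mul_dotProduct_mulVec_le 1
  rw [succMin_eq_sInf]
  refine (Real.sqrt_pos.2 hδ).trans_le
    (le_csInf (succMinRadii_nonempty (mulVec_injective_of_posDef_transpose_mul_self hA) hi) ?_)
  rintro r ⟨-, v, hli, hr⟩
  set j₀ : Fin i := ⟨0, h1⟩
  have hz : v j₀ ≠ 0 := fun h => hli.ne_zero j₀ (by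
    simp only [latticeVec, h, Pi.zero_apply, Int.cast_zero]
    exact mulVec_zero A)
  refine le_trans ?_ (hr j₀)
  rw [← Real.sqrt_sq (euclNorm_nonneg _), latticeVec, euclNorm_mulVec_sq]
  refine Real.sqrt_le_sqrt
    ((le_mul_of_one_le_right hδ.le (one_le_dotProduct_self_intCast hz)).trans ?_)
  simpa using hle (fun k => (v j₀ k : ℝ))

theorem mul_succMin_le_succMin {m p n i : ℕ} {R : Matrix (Fin m) (Fin n) ℝ}
    {S : Matrix (Fin p) (Fin n) ℝ} (hR : Function.Injective R.mulVec)
    (hS : Function.Injective S.mulVec) {c : ℝ} (hc : 0 < c)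
    (hRS : ∀ x, c * euclNorm (S *ᵥ x) ≤ euclNorm (R *ᵥ x)) (hi : i ≤ n) :
    c * succMin S i ≤ succMin R i := by
  rw [succMin_eq_sInf, succMin_eq_sInf]
  refine le_csInf (succMinRadii_nonempty hR hi) fun r ⟨hr0, v, hli, hr⟩ => ?_
  have hmem : r / c ∈ succMinRadii S i :=
    ⟨div_nonneg hr0 hc.le, v, (linearIndependent_latticeVec_iff hS v).2
      ((linearIndependent_latticeVec_iff hR v).1 hli),
      fun j => (le_div_iff₀' hc).2 ((hRS _).trans (hr j))⟩
  rw [mul_comm, ← le_div_iff₀ hc]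
  exact csInf_le ⟨0, fun _ h => h.1⟩ hmem

theorem succMin_lt_succMin {m p n i : ℕ} {R : Matrix (Fin m) (Fin n) ℝ}
    {S : Matrix (Fin p) (Fin n) ℝ} (hS : (Sᵀ * S).PosDef) (hRS : (Rᵀ * R - Sᵀ * S).PosDef)
    (h1 : 1 ≤ i) (hi : i ≤ n) : succMin S i < succMin R i := by
  have hR : (Rᵀ * R).PosDef := by simpa only [add_sub_cancel] using hS.add hRS
  obtain ⟨δ, hδ, hle⟩ := hRS.exists_pos_mul_dotProduct_mulVec_le (Sᵀ * S)
  -- `‖R x‖² = ‖S x‖² + xᵀ (RᵀR - SᵀS) x ≥ (1 + δ) ‖S x‖²`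
  have hscale : ∀ x, √(1 + δ) * euclNorm (S *ᵥ x) ≤ euclNorm (R *ᵥ x) := by
    intro x
    rw [← sq_le_sq₀ (mul_nonneg (Real.sqrt_nonneg _) (euclNorm_nonneg _)) (euclNorm_nonneg _),
      mul_pow, Real.sq_sqrt (by positivity), euclNorm_mulVec_sq, euclNorm_mulVec_sq]
    have := hle x
    rw [sub_mulVec, dotProduct_sub] at this
    linarith
  calc succMin S i < √(1 + δ) * succMin S i :=
        lt_mul_left (succMin_pos hS h1 hi) (Real.lt_sqrt zero_le_one |>.2 (by linarith))
    _ ≤ succMin R i := mul_succMin_le_succMin (mulVec_injective_of_posDef_transpose_mul_self hR)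
        (mulVec_injective_of_posDef_transpose_mul_self hS) (by positivity) hscale hi

theorem succMin_lt_succMin_of_isCholesky {m i : ℕ} {A A' R S : Matrix (Fin m) (Fin m) ℝ}
    (hR : IsCholesky A R) (hS : IsCholesky A' S) (hA' : A'.PosDef) (hAA' : (A - A').PosDef)
    (h1 : 1 ≤ i) (hi : i ≤ m) : succMin S i < succMin R i := by
  obtain ⟨-, -, rfl⟩ := hR
  obtain ⟨-, -, rfl⟩ := hS
  exact succMin_lt_succMin hA' hAA' h1 hi

theorem statement7 {n m : ℕ} (G1 G2 : Matrix (Fin n) (Fin n) ℝ)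
    (hG1 : G1.PosDef) (hG2 : G2.PosDef) (hdiff : (G1 - G2).PosDef)
    (G : Matrix (Fin m) (Fin m) ℝ) (hG : G.PosSemidef)
    (B : Matrix (Fin n) (Fin m) ℝ) (hB : B.rank = m)
    (R1 R2 R3 R4 Rh1 Rh2 Rh3 Rh4 : Matrix (Fin m) (Fin m) ℝ)
    (hR1 : IsCholesky (G + Bᵀ * G1 * B) R1)
    (hR2 : IsCholesky (G + Bᵀ * G2 * B) R2)
    (hR3 : IsCholesky (G + Bᵀ * G1⁻¹ * B) R3)
    (hR4 : IsCholesky (G + Bᵀ * G2⁻¹ * B) R4)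
    (hRh1 : IsCholesky (G + Bᵀ * G1 * B)⁻¹ Rh1)
    (hRh2 : IsCholesky (G + Bᵀ * G2 * B)⁻¹ Rh2)
    (hRh3 : IsCholesky (G + Bᵀ * G1⁻¹ * B)⁻¹ Rh3)
    (hRh4 : IsCholesky (G + Bᵀ * G2⁻¹ * B)⁻¹ Rh4) :
    ∀ i : ℕ, 1 ≤ i → i ≤ m →
      succMin R2 i < succMin R1 i ∧ succMin Rh1 i < succMin Rh2 i ∧
      succMin R3 i < succMin R4 i ∧ succMin Rh4 i < succMin Rh3 i := by
  intro i h1 hi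
  have hBinj : Function.Injective B.mulVec :=
    mulVec_injective_of_rank_eq (hB.trans (Fintype.card_fin m).symm)
  have hgram : ∀ {D : Matrix (Fin n) (Fin n) ℝ}, D.PosDef → (G + Bᵀ * D * B).PosDef :=
    fun hD => PosDef.posSemidef_add hG (hD.transpose_mul_mul_same hBinj)
  have hA2 := hgram hG2
  have hA3 := hgram hG1.inv
  have hA12 := posDef_add_transpose_mul_mul_sub G hBinj hdiff
  have hA43 := posDef_add_transpose_mul_mul_sub G hBinj (hG2.inv_sub_inv hdiff)
  have hA1 : (G + Bᵀ * G1 * B).PosDef := by simpa only [add_sub_cancel] using hA2.add hA12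
  have hA4 : (G + Bᵀ * G2⁻¹ * B).PosDef := by simpa only [add_sub_cancel] using hA3.add hA43
  exact ⟨succMin_lt_succMin_of_isCholesky hR1 hR2 hA2 hA12 h1 hi,
    succMin_lt_succMin_of_isCholesky hRh2 hRh1 hA1.inv (hA2.inv_sub_inv hA12) h1 hi,
    succMin_lt_succMin_of_isCholesky hR4 hR3 hA3 hA43 h1 hi,
    succMin_lt_succMin_of_isCholesky hRh3 hRh4 hA4.inv (hA3.inv_sub_inv hA43) h1 hi⟩
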